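/- arXiv:2603.04635 — 3 statements merged into one kernel-verified Lean document; each statement's English description precedes it below -/
import Mathlib

section
/- If q is a product distribution over [n]×[m] and the total variation distance between p and q is at most ε/3, then the total variation distance between p and the product of its own marginals p₁ × p₂ is at most ε. -/
theorem stmt_0 (n m : ℕ) (hn : 0 < n) (hm : 0 < m) (ε : ℝ) (hε : 0 < ε)
    (p q : Fin n × Fin m → ℝ)
    (hp : (∀ a, 0 ≤ p a) ∧ ∑ a, p a = 1)
    (hq : (∀ a, 0 ≤ q a) ∧ ∑ a, q a = 1)
    (hprod : ∃ (q1 : Fin n → ℝ) (q2 : Fin m → ℝ),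
      (∀ i, 0 ≤ q1 i) ∧ ∑ i, q1 i = 1 ∧ (∀ j, 0 ≤ q2 j) ∧ ∑ j, q2 j = 1 ∧
      ∀ i j, q (i, j) = q1 i * q2 j)
    (hclose : (∑ a, |p a - q a|) / 2 ≤ ε / 3) :
    (∑ a : Fin n × Fin m, |p a - (∑ j, p (a.1, j)) * (∑ i, p (i, a.2))|) / 2 ≤ ε := by
  obtain ⟨hp0, hpsum⟩ := hp
  obtain ⟨hq0, hqsum⟩ := hq
  obtain ⟨q1, q2, hq10, hq11, hq20, hq21, hqprod⟩ := hprod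
  set S : ℝ := ∑ a : Fin n × Fin m, |p a - q a| with hS
  have hS23 : S ≤ 2 * (ε / 3) := by linarith
  set p1 : Fin n → ℝ := fun i => ∑ j, p (i, j) with hp1def
  set p2 : Fin m → ℝ := fun j => ∑ i, p (i, j) with hp2def
  have hp1sum : ∑ i, p1 i = 1 := by
    rw [hp1def, ← Fintype.sum_prod_type]; exact hpsum
  have hq1' : ∀ i, ∑ j, q (i, j) = q1 i := by
    intro i
    simp only [hqprod, ← Finset.mul_sum, hq21, mul_one]
  have hq2' : ∀ j, ∑ i, q (i, j) = q2 j := by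
    intro j
    simp only [hqprod, ← Finset.sum_mul, hq11, one_mul]
  have h1 : ∑ i, |p1 i - q1 i| ≤ S := by
    rw [hS, Fintype.sum_prod_type]
    apply Finset.sum_le_sum
    intro i _
    rw [← hq1' i]
    calc |p1 i - ∑ j, q (i, j)| = |∑ j, (p (i, j) - q (i, j))| := by
          rw [Finset.sum_sub_distrib]
      _ ≤ ∑ j, |p (i, j) - q (i, j)| := Finset.abs_sum_le_sum_abs _ _
  have h2 : ∑ j, |p2 j - q2 j| ≤ S := by
    rw [hS, Fintype.sum_prod_type_right]
    apply Finset.sum_le_sum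
    intro j _
    rw [← hq2' j]
    calc |p2 j - ∑ i, q (i, j)| = |∑ i, (p (i, j) - q (i, j))| := by
          rw [Finset.sum_sub_distrib]
      _ ≤ ∑ i, |p (i, j) - q (i, j)| := Finset.abs_sum_le_sum_abs _ _
  have hp10 : ∀ i, 0 ≤ p1 i := fun i => Finset.sum_nonneg fun j _ => hp0 _
  have key : ∑ a : Fin n × Fin m, |p a - p1 a.1 * p2 a.2| ≤ 3 * S := by
    have step : ∀ a : Fin n × Fin m, |p a - p1 a.1 * p2 a.2| ≤
        |p a - q a| + |q1 a.1 - p1 a.1| * q2 a.2 + p1 a.1 * |q2 a.2 - p2 a.2| := by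
      rintro ⟨i, j⟩
      have hq' : q (i, j) = q1 i * q2 j := hqprod i j
      have hb : |q1 i * q2 j - p1 i * p2 j| ≤ |q1 i - p1 i| * q2 j + p1 i * |q2 j - p2 j| := by
        have he : q1 i * q2 j - p1 i * p2 j
            = (q1 i - p1 i) * q2 j + p1 i * (q2 j - p2 j) := by ring
        rw [he]
        refine (abs_add_le _ _).trans ?_
        rw [abs_mul, abs_mul, abs_of_nonneg (hq20 j), abs_of_nonneg (hp10 i)]
      calc |p (i, j) - p1 i * p2 j|
          ≤ |p (i, j) - q (i, j)| + |q (i, j) - p1 i * p2 j| := abs_sub_le _ _ _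
        _ = |p (i, j) - q (i, j)| + |q1 i * q2 j - p1 i * p2 j| := by rw [hq']
        _ ≤ _ := by simpa using by linarith
    calc ∑ a : Fin n × Fin m, |p a - p1 a.1 * p2 a.2|
        ≤ ∑ a : Fin n × Fin m,
            (|p a - q a| + |q1 a.1 - p1 a.1| * q2 a.2 + p1 a.1 * |q2 a.2 - p2 a.2|) :=
          Finset.sum_le_sum fun a _ => step a
      _ = S + (∑ i, |q1 i - p1 i|) * (∑ j, q2 j) + (∑ i, p1 i) * (∑ j, |q2 j - p2 j|) := by
          rw [Finset.sum_add_distrib, Finset.sum_add_distrib]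
          congr 1
          · congr 1
            rw [Fintype.sum_prod_type, Finset.sum_mul_sum]
          · rw [Fintype.sum_prod_type, Finset.sum_mul_sum]
      _ ≤ 3 * S := by
          rw [hq21, hp1sum, mul_one, one_mul]
          have e1 : ∑ i, |q1 i - p1 i| = ∑ i, |p1 i - q1 i| :=
            Finset.sum_congr rfl fun i _ => abs_sub_comm _ _
          have e2 : ∑ j, |q2 j - p2 j| = ∑ j, |p2 j - q2 j| :=
            Finset.sum_congr rfl fun j _ => abs_sub_comm _ _
          rw [e1, e2]; linarith
  have hfold : (∑ a : Fin n × Fin m, |p a - (∑ j, p (a.1, j)) * (∑ i, p (i, a.2))|)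
      = ∑ a : Fin n × Fin m, |p a - p1 a.1 * p2 a.2| := rfl
  rw [hfold]
  linarith
end

section
/- For all real u with 0 ≤ u ≤ 1 and all ε ∈ [0,1]: 1 − εu ≤ cosh(u)^m · (1 − ε·tanh(u)) ≤ 1, provided m·u² ≤ εu/2 (i.e., mu ≤ ε/2). -/
/-! Write `t = tanh u`. Since `cosh u ^ m ≥ 1` and `t ≤ u`, the lower bound is
`1 - ε u ≤ 1 - ε t ≤ cosh u ^ m (1 - ε t)`. For the upper bound,
`cosh u ^ m ≤ exp (m u² / 2)` and `1 - ε t ≤ exp (-ε t)`, so it suffices that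
`m u² / 2 ≤ ε t`; this follows from `m u ≤ ε / 2` and `t ≥ u - u³ / 3 ≥ u / 4`. -/

open Real

lemma le_apply_of_hasDerivAt_nonneg {f f' : ℝ → ℝ} {a u : ℝ}
    (hf : ∀ x, HasDerivAt f (f' x) x) (hf' : ∀ x, a < x → 0 ≤ f' x) (hau : a ≤ u) :
    f a ≤ f u :=
  monotoneOn_of_hasDerivWithinAt_nonneg (convex_Ici a)
    (fun x _ => (hf x).continuousAt.continuousWithinAt)
    (fun x _ => (hf x).hasDerivWithinAt)
    (fun x hx => hf' x (by simpa only [interior_Ici, Set.mem_Ioi] using hx))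
    Set.self_mem_Ici hau hau

namespace Real

lemma sinh_le_mul_cosh {u : ℝ} (hu : 0 ≤ u) : sinh u ≤ u * cosh u := by
  have hderiv (x : ℝ) :
      HasDerivAt (fun x => x * cosh x - sinh x) (x * sinh x) x := by
    refine (((hasDerivAt_id x).mul (hasDerivAt_cosh x)).sub (hasDerivAt_sinh x)).congr_deriv ?_
    simp only [id_eq]
    ring
  have := le_apply_of_hasDerivAt_nonneg hderiv
    (fun x hx => mul_nonneg hx.le (sinh_pos_iff.2 hx).le) hu
  simp only [zero_mul, sinh_zero, sub_zero] at this
  linarith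

lemma mul_cosh_le_sinh {u : ℝ} (hu : 0 ≤ u) : (u - u ^ 3 / 3) * cosh u ≤ sinh u := by
  have hderiv (x : ℝ) :
      HasDerivAt (fun x => sinh x - (x - x ^ 3 / 3) * cosh x)
        (x * (x * cosh x - sinh x) + x ^ 3 / 3 * sinh x) x := by
    refine ((hasDerivAt_sinh x).sub (((hasDerivAt_id x).sub
      ((hasDerivAt_pow 3 x).div_const 3)).mul (hasDerivAt_cosh x))).congr_deriv ?_
    simp only [Pi.sub_apply, id_eq]
    ring
  have hnonneg (x : ℝ) (hx : 0 < x) : 0 ≤ x * (x * cosh x - sinh x) + x ^ 3 / 3 * sinh x :=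
    add_nonneg (mul_nonneg hx.le (sub_nonneg.2 (sinh_le_mul_cosh hx.le)))
      (mul_nonneg (by positivity) (sinh_pos_iff.2 hx).le)
  have := le_apply_of_hasDerivAt_nonneg hderiv hnonneg hu
  simp only [sinh_zero, zero_sub, cosh_zero] at this
  linarith

lemma tanh_le_self {u : ℝ} (hu : 0 ≤ u) : tanh u ≤ u := by
  rw [tanh_eq_sinh_div_cosh, div_le_iff₀ (cosh_pos u)]
  exact sinh_le_mul_cosh hu

lemma sub_cube_div_three_le_tanh {u : ℝ} (hu : 0 ≤ u) : u - u ^ 3 / 3 ≤ tanh u := by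
  rw [tanh_eq_sinh_div_cosh, le_div_iff₀ (cosh_pos u)]
  exact mul_cosh_le_sinh hu

lemma tanh_nonneg {u : ℝ} (hu : 0 ≤ u) : 0 ≤ tanh u := by
  rw [tanh_eq_sinh_div_cosh]
  exact div_nonneg (sinh_nonneg_iff.2 hu) (cosh_pos u).le

lemma cosh_pow_mul_one_sub_le_one {m : ℕ} {u t : ℝ} (ht : m * u ^ 2 / 2 ≤ t) :
    cosh u ^ m * (1 - t) ≤ 1 :=
  calc cosh u ^ m * (1 - t)
      ≤ cosh u ^ m * exp (-t) :=
        mul_le_mul_of_nonneg_left (one_sub_le_exp_neg t) (pow_nonneg (cosh_pos u).le m)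
    _ ≤ exp (u ^ 2 / 2) ^ m * exp (-t) :=
        mul_le_mul_of_nonneg_right (pow_le_pow_left₀ (cosh_pos u).le (cosh_le_exp_half_sq u) m)
          (exp_pos _).le
    _ = exp (m * u ^ 2 / 2 - t) := by
        rw [← exp_nat_mul, ← exp_add]
        ring_nf
    _ ≤ 1 := exp_le_one_iff.2 (by linarith)

end Real

theorem stmt_10_general (m : ℕ) (u ε : ℝ)
    (hu : u ∈ Set.Icc (0:ℝ) 1) (hε : ε ∈ Set.Icc (0:ℝ) 1)
    (hmu : (m : ℝ) * u ≤ ε / 2) :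
    1 - ε * u ≤ Real.cosh u ^ m * (1 - ε * Real.tanh u) ∧
    Real.cosh u ^ m * (1 - ε * Real.tanh u) ≤ 1 := by
  obtain ⟨hu0, hu1⟩ := hu
  obtain ⟨hε0, hε1⟩ := hε
  have htanh_le := tanh_le_self hu0
  have htanh_ge := sub_cube_div_three_le_tanh hu0
  have htanh_nonneg := tanh_nonneg hu0
  constructor
  · have hfactor : 0 ≤ 1 - ε * tanh u := by nlinarith [tanh_lt_one u]
    calc 1 - ε * u ≤ 1 - ε * tanh u := by nlinarith
      _ ≤ cosh u ^ m * (1 - ε * tanh u) :=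
        le_mul_of_one_le_left hfactor (one_le_pow₀ (one_le_cosh u))
  · apply cosh_pow_mul_one_sub_le_one
    have hcube : u ^ 3 / 3 ≤ 3 * u / 4 := by nlinarith [mul_le_mul hu1 hu1 hu0 zero_le_one]
    nlinarith [mul_le_mul_of_nonneg_right hmu hu0]

theorem stmt_10 (m : ℕ) (hm : 0 < m) (u ε : ℝ)
    (hu : u ∈ Set.Icc (0:ℝ) 1) (hε : ε ∈ Set.Icc (0:ℝ) 1)
    (hmu : (m : ℝ) * u ≤ ε / 2) :
    1 - ε * u ≤ Real.cosh u ^ m * (1 - ε * Real.tanh u) ∧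
    Real.cosh u ^ m * (1 - ε * Real.tanh u) ≤ 1 :=
  stmt_10_general m u ε hu hε hmu
end

section
/- Let ε ∈ (0,1) and let l be an integer with 2 ≤ l ≤ 2/ε. Then ∑_{i=1}^{⌊l/2⌋} C(l, 2i)·ε^{2i−2} ≤ 12·l², where C(l,k) denotes binomial coefficients. -/
open scoped Nat

lemma fact_lb : ∀ i : ℕ, 1 ≤ i → 2 * 6 ^ (i - 1) ≤ (2 * i) ! := by
  intro i hi
  induction i with
  | zero => omega
  | succ n ih =>
    rcases Nat.eq_or_lt_of_le hi with h | h
    · simp [← h]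
    · have hn : 1 ≤ n := by omega
      have := ih hn
      have h2 : (2 * (n + 1)) ! = (2 * n) ! * ((2 * n + 1) * (2 * n + 2)) := by
        have : 2 * (n + 1) = (2 * n + 1) + 1 := by ring
        rw [this, Nat.factorial_succ, Nat.factorial_succ]
        ring
      rw [h2]
      have h3 : n + 1 - 1 = (n - 1) + 1 := by omega
      rw [h3, pow_succ]
      have h4 : 6 ≤ (2 * n + 1) * (2 * n + 2) := by nlinarith
      calc 2 * (6 ^ (n - 1) * 6) = (2 * 6 ^ (n - 1)) * 6 := by ring
        _ ≤ (2 * n) ! * ((2 * n + 1) * (2 * n + 2)) :=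
          Nat.mul_le_mul this h4

theorem stmt_14 (ε : ℝ) (hε : ε ∈ Set.Ioo (0:ℝ) 1) (l : ℕ)
    (hl : 2 ≤ l) (hlε : (l : ℝ) ≤ 2 / ε) :
    ∑ i ∈ Finset.Icc 1 (l / 2), (l.choose (2 * i) : ℝ) * ε ^ (2 * i - 2)
      ≤ 12 * (l : ℝ) ^ 2 := by
  obtain ⟨hε0, hε1⟩ := hε
  have hlε2 : (l : ℝ) * ε ≤ 2 := by
    rw [div_eq_mul_inv] at hlε
    calc (l : ℝ) * ε ≤ (2 * ε⁻¹) * ε := by nlinarith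
      _ = 2 := by field_simp
  have hl0 : (0 : ℝ) ≤ l := by positivity
  -- termwise bound
  have key : ∀ i ∈ Finset.Icc 1 (l / 2),
      (l.choose (2 * i) : ℝ) * ε ^ (2 * i - 2)
        ≤ (l : ℝ) ^ 2 * ((1/2) * (2/3) ^ (i - 1)) := by
    intro i hi
    simp only [Finset.mem_Icc] at hi
    obtain ⟨hi1, _⟩ := hi
    have hfact : (2 : ℝ) * 6 ^ (i - 1) ≤ ((2 * i) ! : ℝ) := by
      exact_mod_cast fact_lb i hi1
    have hch : (l.choose (2 * i) : ℝ) ≤ (l : ℝ) ^ (2 * i) / (2 * i) ! := by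
      have := Nat.choose_le_pow_div (2 * i) l (α := ℝ)
      simpa using this
    have hεpow : (0 : ℝ) ≤ ε ^ (2 * i - 2) := by positivity
    have h1 : (l.choose (2 * i) : ℝ) * ε ^ (2 * i - 2)
        ≤ (l : ℝ) ^ (2 * i) * ε ^ (2 * i - 2) / (2 * i) ! := by
      calc (l.choose (2 * i) : ℝ) * ε ^ (2 * i - 2)
          ≤ ((l : ℝ) ^ (2 * i) / (2 * i) !) * ε ^ (2 * i - 2) :=
            mul_le_mul_of_nonneg_right hch hεpow
        _ = (l : ℝ) ^ (2 * i) * ε ^ (2 * i - 2) / (2 * i) ! := by ring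
    have hpow : (l : ℝ) ^ (2 * i) * ε ^ (2 * i - 2)
        = (l : ℝ) ^ 2 * ((l : ℝ) * ε) ^ (2 * i - 2) := by
      have hsplit : (l : ℝ) ^ (2 * i) = (l : ℝ) ^ 2 * (l : ℝ) ^ (2 * i - 2) := by
        rw [← pow_add]; congr 1; omega
      rw [hsplit, mul_pow]; ring
    have hle4 : ((l : ℝ) * ε) ^ (2 * i - 2) ≤ 4 ^ (i - 1) := by
      have h1 : 2 * i - 2 = 2 * (i - 1) := by omega
      rw [h1, pow_mul]
      have hnn : (0:ℝ) ≤ (l : ℝ) * ε := by positivity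
      have : ((l : ℝ) * ε) ^ 2 ≤ 4 := by nlinarith
      exact pow_le_pow_left₀ (by positivity) this (i - 1)
    have hfpos : (0 : ℝ) < ((2 * i) ! : ℝ) := by positivity
    calc (l.choose (2 * i) : ℝ) * ε ^ (2 * i - 2)
        ≤ (l : ℝ) ^ 2 * ((l : ℝ) * ε) ^ (2 * i - 2) / (2 * i) ! := by
          rw [← hpow]; exact h1
      _ ≤ (l : ℝ) ^ 2 * 4 ^ (i - 1) / (2 * 6 ^ (i - 1)) := by
          apply div_le_div₀ (by positivity) _ (by positivity) hfact
          exact mul_le_mul_of_nonneg_left hle4 (by positivity)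
      _ = (l : ℝ) ^ 2 * ((1/2) * (2/3) ^ (i - 1)) := by
          have h46 : (2/3 : ℝ) ^ (i-1) = 4 ^ (i-1) / 6 ^ (i-1) := by
            rw [← div_pow]; norm_num
          rw [h46]
          field_simp
  calc ∑ i ∈ Finset.Icc 1 (l / 2), (l.choose (2 * i) : ℝ) * ε ^ (2 * i - 2)
      ≤ ∑ i ∈ Finset.Icc 1 (l / 2), (l : ℝ) ^ 2 * ((1/2) * (2/3) ^ (i - 1)) :=
        Finset.sum_le_sum key
    _ = (l : ℝ) ^ 2 * (1/2) * ∑ i ∈ Finset.Icc 1 (l / 2), (2/3 : ℝ) ^ (i - 1) := by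
        rw [Finset.mul_sum]; apply Finset.sum_congr rfl; intro i _; ring
    _ ≤ (l : ℝ) ^ 2 * (1/2) * 3 := by
        apply mul_le_mul_of_nonneg_left _ (by positivity)
        rw [← Finset.Ico_add_one_right_eq_Icc, Finset.sum_Ico_eq_sum_range]
        have h2 : ∀ j ∈ Finset.range (l / 2 + 1 - 1), (2/3 : ℝ) ^ (1 + j - 1) = (2/3 : ℝ) ^ j := by
          intro j _; congr 1; omega
        rw [Finset.sum_congr rfl h2, geom_sum_eq (by norm_num : (2/3:ℝ) ≠ 1)]
        have hp : (0:ℝ) ≤ (2/3 : ℝ) ^ (l / 2 + 1 - 1) := by positivity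
        rw [div_le_iff_of_neg (by norm_num : (2/3:ℝ) - 1 < 0)]
        linarith
    _ ≤ 12 * (l : ℝ) ^ 2 := by nlinarith
end
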